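/- Let A = k[x]/(x²) with Koszul resolution P, and let α = (α₀, α₁) and β = (β₀, β₁) be as in the previous two statements (α₀(e₁) = x, α₁(e_i) = −i e_i; β₀(e₂) = x, β₁(e_{2i}) = −e_{2i−1}). Then the bracket cocycle [α,β]₀ = −α₀∘β₁ + β₀∘α₁ : P → A equals β₀; i.e. the Gerstenhaber bracket of the classes of α₀ and β₀ is the class of β₀. -/
import Mathlib


open TensorProduct DirectSum

set_option synthInstance.maxHeartbeats 1000000
set_option maxHeartbeats 2000000

namespace Stmt12

variable (k : Type*) [Field k]

/-- The algebra `A = k[x]/(x²)`. -/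
abbrev A : Type _ := Polynomial k ⧸ Ideal.span {(Polynomial.X : Polynomial k) ^ 2}

/-- The class of `x`. -/
noncomputable def x : A k := Ideal.Quotient.mk _ Polynomial.X

/-- `A ⊗ A`, the free rank one `A`-bimodule. -/
abbrev T2 : Type _ := A k ⊗[k] A k

/-- `A ⊗ A ⊗ A`, the underlying bimodule of `(A⊗A) ⊗_A (A⊗A)`. -/
abbrev T3 : Type _ := A k ⊗[k] (A k ⊗[k] A k)

noncomputable instance : CommRing (T2 k) := inferInstance
noncomputable instance : Algebra k (T2 k) := inferInstance
noncomputable instance : CommRing (T3 k) := inferInstance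
noncomputable instance : Algebra k (T3 k) := inferInstance

/-- `u = x⊗1 − 1⊗x`. -/
noncomputable def u : T2 k := x k ⊗ₜ[k] 1 - 1 ⊗ₜ[k] x k

/-- `v = x⊗1 + 1⊗x`. -/
noncomputable def v : T2 k := x k ⊗ₜ[k] 1 + 1 ⊗ₜ[k] x k

/-- The element by which the differential `d(e_i) = e_{i−1}·w i` multiplies:
out of an odd-indexed generator it is `u`, out of an even-indexed one it is `v`
(so that the resolution ends `⋯ →·v A⊗A →·u A⊗A →μ A`). -/
noncomputable def w (i : ℕ) : T2 k := if Odd i then u k else v k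

/-- The shifted 2-periodic Koszul resolution `P = ⊕_{i∈ℕ} (A⊗A)·e_i`. -/
abbrev M : Type _ := ⨁ _i : ℕ, T2 k

/-- `P ⊗_A P = ⊕_{(j,l)} (A⊗A⊗A)·(e_j ⊗ e_l)`. -/
abbrev N : Type _ := ⨁ _p : ℕ × ℕ, T3 k

/-- The differential of `P`: `e_i ↦ e_{i−1} · w i`. -/
noncomputable def dP : M k →ₗ[k] M k :=
  DirectSum.toModule k ℕ (M k) fun i =>
    match i with
    | 0 => 0
    | (j + 1) =>
        (DirectSum.lof k ℕ (fun _ => T2 k) j) ∘ₗ LinearMap.mulRight k (w k (j + 1))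

/-- The Hochschild 1-cocycle `α₀ : P → A`, `α₀(e₁) = x`. -/
noncomputable def alpha0 : M k →ₗ[k] A k :=
  DirectSum.toModule k ℕ (A k) fun i =>
    if i = 1 then
      (LinearMap.mul' k (A k)) ∘ₗ LinearMap.mulRight k (x k ⊗ₜ[k] (1 : A k))
    else 0

/-- `α₁ : P → P`, `α₁(e_i) = −i e_i` (a homotopy lifting of `α₀`). -/
noncomputable def alpha1 : M k →ₗ[k] M k :=
  DirectSum.toModule k ℕ (M k) fun i =>
    (-(i : ℤ)) • DirectSum.lof k ℕ (fun _ => T2 k) i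

/-- The Hochschild 2-cocycle `β₀ : P → A`, `β₀(e₂) = x`. -/
noncomputable def beta0 : M k →ₗ[k] A k :=
  DirectSum.toModule k ℕ (A k) fun i =>
    if i = 2 then
      (LinearMap.mul' k (A k)) ∘ₗ LinearMap.mulRight k (x k ⊗ₜ[k] (1 : A k))
    else 0

/-- `β₁ : P → P`, `β₁(e_{2i}) = −e_{2i−1}`, `β₁(e_{2i+1}) = 0`
(a homotopy lifting of `β₀`). -/
noncomputable def beta1 : M k →ₗ[k] M k :=
  DirectSum.toModule k ℕ (M k) fun i =>
    match i with
    | 0 => 0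
    | (j + 1) =>
        if Even (j + 1) then (-(1 : ℤ)) • DirectSum.lof k ℕ (fun _ => T2 k) j
        else 0

/-- the zeroth component of the bracket of the
`A_∞`-coderivations `α = (α₀, α₁, 0, …)` and `β = (β₀, β₁, 0, …)`,
`[α,β]₀ = α₀∘β₁ − (−1)^{(|α|−1)(|β|−1)} β₀∘α₁ = α₀∘β₁ − β₀∘α₁`,
equals `β₀`; i.e. the Gerstenhaber bracket of the classes of `α₀` and `β₀`
in Hochschild cohomology is the class of `β₀`. -/
theorem stmt12 : alpha0 k ∘ₗ beta1 k - beta0 k ∘ₗ alpha1 k = beta0 k := by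
  ext i : 1
  match i with
  | 0 =>
    apply LinearMap.ext; intro t
    simp only [LinearMap.comp_apply, LinearMap.sub_apply, alpha0, alpha1, beta0, beta1,
      DirectSum.toModule_lof]
    simp
  | 1 =>
    apply LinearMap.ext; intro t
    simp only [LinearMap.comp_apply, LinearMap.sub_apply, alpha0, alpha1, beta0, beta1,
      DirectSum.toModule_lof]
    norm_num
  | 2 =>
    apply LinearMap.ext; intro t
    simp only [LinearMap.comp_apply, LinearMap.sub_apply, alpha0, alpha1, beta0, beta1,
      DirectSum.toModule_lof, LinearMap.neg_apply, LinearMap.smul_apply, map_neg, map_zsmul]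
    norm_num
    ring
  | (j+3) =>
    apply LinearMap.ext; intro t
    simp only [LinearMap.comp_apply, LinearMap.sub_apply, alpha0, alpha1, beta0, beta1,
      DirectSum.toModule_lof, LinearMap.neg_apply, LinearMap.smul_apply, map_neg, map_zsmul,
      LinearMap.zero_apply]
    have h1 : j + 2 ≠ 1 := by omega
    have h2 : j + 3 ≠ 2 := by omega
    rcases Nat.even_or_odd (j+3) with h | h
    · rw [if_pos h]
      simp only [LinearMap.smul_apply, map_zsmul, DirectSum.toModule_lof, if_neg h1, if_neg h2,
        LinearMap.zero_apply, smul_zero, neg_zero, sub_zero]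
    · rw [if_neg (by simpa using Nat.not_even_iff_odd.mpr h)]
      simp only [DirectSum.toModule_lof, if_neg h2, LinearMap.zero_apply, map_zero, neg_zero,
        smul_zero, sub_zero]

end Stmt12
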